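/- Let T be a tree on n vertices whose edges are assigned s×s real positive definite matrix weights, let D be its distance matrix and L its Laplacian matrix formed from the inverses of the weights. Let δ_i denote the degree of the ith vertex, τ = (2−δ_1, 2−δ_2, …, 2−δ_n)^T, Δ = τ ⊗ I_s, and let R be the sum of all the edge weight matrices of T. Then D^{-1} = −(1/2)L + (1/2) Δ R^{-1} Δ^T. -/

import Mathlib

open Matrix

/-- Matrix-weighted Laplacian: each edge weight is replaced by its inverse. -/
noncomputable def matLap {n s : ℕ} (G : SimpleGraph (Fin n)) [DecidableRel G.Adj]
    (w : Sym2 (Fin n) → Matrix (Fin s) (Fin s) ℝ) :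
    Matrix (Fin n × Fin s) (Fin n × Fin s) ℝ :=
  Matrix.of fun p q =>
    if p.1 = q.1 then (∑ k ∈ G.neighborFinset p.1, (w s(p.1, k))⁻¹) p.2 q.2
    else if G.Adj p.1 q.1 then (-(w s(p.1, q.1))⁻¹) p.2 q.2
    else 0

/-!
View `D` and `L` as `n × n` block matrices over the ring of `s × s` matrices, and root the tree
at a vertex `j`. Every `i ≠ j` has a parent `p i` (the next vertex on the path to `j`) with
`d(i,j) = W(i, p i) + d(p i, j)`; every other neighbour `k` of `i` is a child, with
`d(k,j) = W(i,k) + d(i,j)`. Hence `∑_{k ~ i} W(i,k)⁻¹ (d(i,j) - d(k,j)) = (τ_i - 2 δ_ij) I`.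
Since the edges are exactly the `{i, p i}` with `i ≠ j`, `R = ∑_{i ≠ j} (d(i,j) - d(p i, j))`
and `∑_i deg(i) d(i,j) = ∑_{i ≠ j} (d(i,j) + d(p i, j))`, so `∑_i τ_i d(i,j) = R`.
These two block identities say `(-L + Δ R⁻¹ Δᵀ) D = 2 I` as soon as `R` is invertible, i.e. as
soon as the tree has an edge.
-/

open Finset SimpleGraph Walk

namespace SimpleGraph.IsTree

variable {V : Type*} {G : SimpleGraph V} (hT : G.IsTree) {r u v k : V}

noncomputable def path (u v : V) : G.Walk u v := (hT.existsUnique_path u v).choose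

lemma isPath_path (u v : V) : (hT.path u v).IsPath := (hT.existsUnique_path u v).choose_spec.1

lemma eq_path {p : G.Walk u v} (hp : p.IsPath) : p = hT.path u v :=
  (hT.existsUnique_path u v).choose_spec.2 p hp

@[simp]
lemma path_self (u : V) : hT.path u u = nil := (hT.eq_path IsPath.nil).symm

-- The parent of `u` when the tree is rooted at `r`; junk value `r` at `u = r`.
noncomputable def parent (r u : V) : V := (hT.path u r).snd

lemma adj_parent (hu : u ≠ r) : G.Adj u (hT.parent r u) :=
  (hT.path u r).adj_snd (not_nil_of_ne hu)

lemma path_eq_cons_parent (hu : u ≠ r) :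
    hT.path u r = cons (hT.adj_parent hu) (hT.path (hT.parent r u) r) := by
  conv_lhs => rw [← (hT.path u r).cons_tail_eq (not_nil_of_ne hu)]
  rw [hT.eq_path (hT.isPath_path u r).tail]
  rfl

lemma length_path_parent (hu : u ≠ r) :
    (hT.path (hT.parent r u) r).length + 1 = (hT.path u r).length := by
  rw [hT.path_eq_cons_parent hu, length_cons]

lemma parent_parent_ne (hu : u ≠ r) (hp : hT.parent r u ≠ r) :
    hT.parent r (hT.parent r u) ≠ u := by
  intro h
  have h₁ := hT.length_path_parent hu
  have h₂ := hT.length_path_parent hp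
  rw [h] at h₂
  omega

lemma parent_eq_or_parent_eq (h : G.Adj u k) :
    (u ≠ r ∧ hT.parent r u = k) ∨ (k ≠ r ∧ hT.parent r k = u) := by
  classical
  by_cases hu : u ∈ (hT.path k r).support
  · -- the path from `k` to `r` passes through `u`, so it starts with the edge `ku`
    have hku : (hT.path k r).takeUntil u hu = cons h.symm nil :=
      (hT.eq_path ((hT.isPath_path k r).takeUntil hu)).trans
        (hT.eq_path (IsPath.nil.cons (by simpa using h.ne'))).symm
    have hpath : hT.path k r = cons h.symm (hT.path u r) := by
      conv_lhs => rw [← (hT.path k r).take_spec hu, hku,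
        hT.eq_path ((hT.isPath_path k r).dropUntil hu)]
      rfl
    refine Or.inr ⟨fun hk => ?_, by simp [parent, hpath]⟩
    subst hk
    simp at hpath
  · have hpath : cons h (hT.path k r) = hT.path u r :=
      hT.eq_path ((hT.isPath_path k r).cons hu)
    exact Or.inl ⟨fun hur => hu (hur ▸ end_mem_support _), by simp [parent, ← hpath]⟩

section WeightedDist

variable {M : Type*} [AddCommMonoid M] (w : Sym2 V → M)

noncomputable def weightedDist (u v : V) : M := ((hT.path u v).edges.map w).sum

@[simp]
lemma weightedDist_self (u : V) : hT.weightedDist w u u = 0 := by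
  simp [weightedDist]

lemma weightedDist_eq_add_parent (hu : u ≠ r) :
    hT.weightedDist w u r = w s(u, hT.parent r u) + hT.weightedDist w (hT.parent r u) r := by
  rw [weightedDist, hT.path_eq_cons_parent hu]
  simp [weightedDist]

end WeightedDist

section Finite

variable [Fintype V] [DecidableEq V]

noncomputable def children (r v : V) : Finset V := {k ∈ univ.erase r | hT.parent r k = v}

lemma sum_neighborFinset_eq_ite_add_sum_children {M : Type*} [AddCommMonoid M]
    [DecidableRel G.Adj] (r v : V) (f : V → M) :
    ∑ k ∈ G.neighborFinset v, f k
      = (if v = r then 0 else f (hT.parent r v)) + ∑ k ∈ hT.children r v, f k := by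
  have hN : G.neighborFinset v = (if v = r then ∅ else {hT.parent r v}) ∪ hT.children r v := by
    ext k
    simp only [mem_neighborFinset, children, mem_union, mem_filter, mem_erase, mem_univ, and_true]
    constructor
    · intro h
      rcases hT.parent_eq_or_parent_eq (r := r) h with ⟨hv, hp⟩ | hk
      · simp [hv, hp]
      · exact Or.inr hk
    · rintro (h | ⟨hk, rfl⟩)
      · split_ifs at h with hv
        · simp at h
        · simpa [mem_singleton.1 h] using hT.adj_parent hv
      · exact (hT.adj_parent hk).symm
  have hdisj : Disjoint (if v = r then ∅ else {hT.parent r v}) (hT.children r v) := by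
    split_ifs with hv
    · exact disjoint_empty_left _
    · simp only [disjoint_singleton_left, children, mem_filter, mem_erase, mem_univ, and_true,
        not_and]
      exact hT.parent_parent_ne hv
  rw [hN, sum_union hdisj, apply_ite (∑ k ∈ ·, f k)]
  simp

lemma degree_eq_ite_add_card_children [DecidableRel G.Adj] (r v : V) :
    G.degree v = (if v = r then 0 else 1) + #(hT.children r v) := by
  rw [← card_neighborFinset_eq_degree, card_eq_sum_ones,
    hT.sum_neighborFinset_eq_ite_add_sum_children r, card_eq_sum_ones]

lemma sum_edgeFinset_eq_sum_parent {M : Type*} [AddCommMonoid M] [Fintype G.edgeSet] (r : V)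
    (f : Sym2 V → M) :
    ∑ e ∈ G.edgeFinset, f e = ∑ u ∈ univ.erase r, f s(u, hT.parent r u) := by
  refine (sum_nbij (fun u => s(u, hT.parent r u)) ?_ ?_ ?_ fun _ _ => rfl).symm
  · intro u hu
    simpa using hT.adj_parent (ne_of_mem_erase hu)
  · intro a ha b hb hab
    rcases Sym2.eq_iff.1 hab with ⟨h, -⟩ | ⟨hab, hba⟩
    · exact h
    · exact absurd (hba ▸ hab).symm <|
        hT.parent_parent_ne (ne_of_mem_erase ha) (hba ▸ ne_of_mem_erase hb)
  · rintro ⟨u, k⟩ he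
    rcases hT.parent_eq_or_parent_eq (r := r) (by simpa using he) with ⟨hu, hp⟩ | ⟨hk, hp⟩
    · exact ⟨u, by simpa using hu, by simp [hp]⟩
    · exact ⟨k, by simpa using hk, by simp [hp, Sym2.eq_swap]⟩

lemma sum_degree_smul_eq_sum_parent [DecidableRel G.Adj] {M : Type*} [AddCommMonoid M] (r : V)
    (f : V → M) :
    ∑ v, G.degree v • f v = ∑ u ∈ univ.erase r, (f u + f (hT.parent r u)) := by
  calc ∑ v, G.degree v • f v = ∑ v, ∑ _k ∈ G.neighborFinset v, f v := by
        simp [card_neighborFinset_eq_degree]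
    _ = ∑ v, ((if v = r then 0 else f v) + ∑ k ∈ hT.children r v, f v) := by
        simp_rw [hT.sum_neighborFinset_eq_ite_add_sum_children r]
    _ = ∑ u ∈ univ.erase r, (f u + f (hT.parent r u)) := by
        simp only [sum_add_distrib, children, sum_fiberwise']
        simp [sum_ite, filter_ne']

lemma sum_two_sub_degree_smul_weightedDist [DecidableRel G.Adj] {R M : Type*} [Ring R]
    [AddCommGroup M] [Module R M] (w : Sym2 V → M) (r : V) :
    ∑ v, ((2 : R) - G.degree v) • hT.weightedDist w v r = ∑ e ∈ G.edgeFinset, w e := by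
  have hedge : ∑ e ∈ G.edgeFinset, w e = ∑ u ∈ univ.erase r,
      (hT.weightedDist w u r - hT.weightedDist w (hT.parent r u) r) := by
    rw [hT.sum_edgeFinset_eq_sum_parent r]
    refine sum_congr rfl fun u hu => ?_
    rw [hT.weightedDist_eq_add_parent w (ne_of_mem_erase hu), add_sub_cancel_right]
  have hroot : ∑ v, hT.weightedDist w v r = ∑ u ∈ univ.erase r, hT.weightedDist w u r :=
    (sum_erase (f := (hT.weightedDist w · r)) _ (hT.weightedDist_self w r)).symm
  simp only [sub_smul, sum_sub_distrib, Nat.cast_smul_eq_nsmul,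
    hT.sum_degree_smul_eq_sum_parent r, hedge, two_smul, sum_add_distrib, hroot]
  abel

end Finite

end SimpleGraph.IsTree

namespace SimpleGraph

variable {V ι K : Type*} [Fintype V] [DecidableEq V] [Fintype ι] [DecidableEq ι] [CommRing K]
  (G : SimpleGraph V) [DecidableRel G.Adj] (w : Sym2 V → Matrix ι ι K)

noncomputable def blockLapMatrix : Matrix V V (Matrix ι ι K) :=
  diagonal (fun i => ∑ k ∈ G.neighborFinset i, (w s(i, k))⁻¹) -
    of fun i k => if G.Adj i k then (w s(i, k))⁻¹ else 0

lemma blockLapMatrix_mul_apply {V' : Type*} (B : Matrix V V' (Matrix ι ι K)) (i : V) (j : V') :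
    (G.blockLapMatrix w * B) i j = ∑ k ∈ G.neighborFinset i, (w s(i, k))⁻¹ * (B i j - B k j) := by
  rw [blockLapMatrix, Matrix.sub_mul, Matrix.sub_apply, diagonal_mul]
  simp only [mul_apply, of_apply, ite_mul, zero_mul, sum_ite, sum_const_zero, add_zero, mul_sub,
    sum_sub_distrib, sum_mul, neighborFinset_eq_filter]

variable {G w}

lemma IsTree.blockLapMatrix_mul_weightedDist (hT : G.IsTree)
    (hw : ∀ e ∈ G.edgeSet, IsUnit (w e)) :
    G.blockLapMatrix w * of (hT.weightedDist w) =
      of (fun i _ => (2 - G.degree i : K) • 1) - (2 : K) • 1 := by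
  have hinv {a b : V} (h : G.Adj a b) : (w s(a, b))⁻¹ * w s(a, b) = 1 :=
    nonsing_inv_mul _ <| (isUnit_iff_isUnit_det _).1 <| hw _ h
  ext1 i j
  -- root the tree at `j`: the parent of `i` contributes `1`, each child of `i` contributes `-1`
  simp only [blockLapMatrix_mul_apply, hT.sum_neighborFinset_eq_ite_add_sum_children j,
    Matrix.sub_apply, of_apply, hT.degree_eq_ite_add_card_children j i]
  have hchild : ∀ k ∈ hT.children j i,
      (w s(i, k))⁻¹ * (hT.weightedDist w i j - hT.weightedDist w k j) = -1 := by
    intro k hk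
    obtain ⟨hkj, rfl⟩ : k ≠ j ∧ hT.parent j k = i := by simpa [IsTree.children] using hk
    rw [hT.weightedDist_eq_add_parent w hkj, sub_add_cancel_right, Sym2.eq_swap, mul_neg,
      hinv (hT.adj_parent hkj)]
  rw [sum_congr rfl hchild, sum_const]
  split_ifs with hij
  · subst hij
    rw [Matrix.smul_apply, one_apply_eq, ← Nat.cast_smul_eq_nsmul K]
    push_cast
    module
  · rw [hT.weightedDist_eq_add_parent w hij, add_sub_cancel_right, hinv (hT.adj_parent hij),
      Matrix.smul_apply, one_apply_ne hij, ← Nat.cast_smul_eq_nsmul K]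
    push_cast
    module

lemma IsTree.degree_outer_smul_mul_weightedDist (hT : G.IsTree) {X : Matrix ι ι K}
    (hX : X * ∑ e ∈ G.edgeFinset, w e = 1) :
    (of fun i k => ((2 - G.degree i : K) * (2 - G.degree k)) • X) * of (hT.weightedDist w) =
      of fun i _ => (2 - G.degree i : K) • 1 := by
  ext1 i j
  calc ∑ k, ((2 - G.degree i : K) * (2 - G.degree k)) • X * hT.weightedDist w k j
      = (2 - G.degree i : K) • (X * ∑ k, (2 - G.degree k : K) • hT.weightedDist w k j) := by
        simp only [mul_sum, Matrix.mul_smul, smul_sum, mul_smul, smul_mul_assoc]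
    _ = (2 - G.degree i : K) • 1 := by
        rw [hT.sum_two_sub_degree_smul_weightedDist, hX]

end SimpleGraph

lemma Matrix.mul_mul_transpose_eq_comp {V ι K : Type*} [Fintype ι] [DecidableEq ι] [CommRing K]
    {τ : V → K} {Δ : Matrix (V × ι) ι K}
    (hΔ : ∀ p b, Δ p b = τ p.1 * if p.2 = b then 1 else 0) (X : Matrix ι ι K) :
    Δ * X * Δᵀ = comp V V ι ι K (of fun i k => (τ i * τ k) • X) := by
  ext ⟨i, a⟩ ⟨k, c⟩
  simp [mul_apply, hΔ, comp_apply]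
  ring

lemma matLap_eq_comp {n s : ℕ} (G : SimpleGraph (Fin n)) [DecidableRel G.Adj]
    (w : Sym2 (Fin n) → Matrix (Fin s) (Fin s) ℝ) :
    matLap G w = comp _ _ _ _ _ (G.blockLapMatrix w) := by
  ext ⟨i, a⟩ ⟨k, c⟩
  by_cases hik : i = k
  · subst hik
    simp [matLap, blockLapMatrix]
  · simp only [matLap, blockLapMatrix, of_apply, comp_apply, Matrix.sub_apply,
      diagonal_apply_ne _ hik, hik, if_false]
    split_ifs <;> simp

/-- (Balaji–Bapat) Let `T` be a tree on `n` vertices with positive definite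
matrix weights, `D` its distance matrix, `L` its Laplacian formed from the inverses of the
weights, `τᵢ = 2 - (degree of i)`, `Δ = τ ⊗ I_s` (an `ns × s` matrix), and `R` the sum of
all the edge weights.  Then `D⁻¹ = -(1/2) L + (1/2) Δ R⁻¹ Δᵀ`. -/
theorem distanceMatrix_inv_tree_posDef {n s : ℕ}
    (G : SimpleGraph (Fin n)) [DecidableRel G.Adj] (hT : G.IsTree)
    (w : Sym2 (Fin n) → Matrix (Fin s) (Fin s) ℝ)
    (hw : ∀ e ∈ G.edgeSet, (w e).PosDef)
    (D : Matrix (Fin n × Fin s) (Fin n × Fin s) ℝ)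
    (hD : ∀ (i j : Fin n) (p : G.Walk i j), p.IsPath →
      ∀ a b, D (i, a) (j, b) = ((p.edges.map w).sum) a b)
    (Δ : Matrix (Fin n × Fin s) (Fin s) ℝ)
    (hΔ : ∀ p b, Δ p b = (2 - (G.degree p.1 : ℝ)) * (if p.2 = b then 1 else 0))
    (R : Matrix (Fin s) (Fin s) ℝ) (hR : R = ∑ e ∈ G.edgeFinset, w e) :
    D⁻¹ = (-(1/2) : ℝ) • matLap G w + ((1/2) : ℝ) • (Δ * R⁻¹ * Δᵀ) := by
  classical
  set e := compAlgEquiv (Fin n) (Fin s) ℝ ℝ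
  have hDe : D = e (of (hT.weightedDist w)) := by
    ext ⟨i, a⟩ ⟨j, b⟩
    exact hD i j _ (hT.isPath_path i j) a b
  have hΔe : Δ * R⁻¹ * Δᵀ = e (of fun i k => ((2 - G.degree i : ℝ) * (2 - G.degree k)) • R⁻¹) :=
    mul_mul_transpose_eq_comp hΔ R⁻¹
  have hLe : matLap G w = e (G.blockLapMatrix w) := matLap_eq_comp G w
  rw [hDe, hLe, hΔe]
  rcases G.edgeFinset.eq_empty_or_nonempty with hE | hE
  · -- a single vertex: `D`, `L` and `R` vanish, and both sides are `0` since `0⁻¹ = 0`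
    obtain rfl : G = ⊥ := edgeFinset_eq_empty.mp hE
    have hDb : of (hT.weightedDist w) = 0 := by
      ext1 i j
      obtain rfl := reachable_bot.1 (hT.connected.preconnected i j)
      simp
    rw [hDb, map_zero, Matrix.inv_zero]
    ext
    simp [e, hR, hE, blockLapMatrix]
  · have hRinv : R⁻¹ * ∑ e ∈ G.edgeFinset, w e = 1 := by
      rw [← hR]
      exact nonsing_inv_mul R <| (isUnit_iff_isUnit_det R).1 <|
        (hR ▸ posDef_sum hE fun e he => hw e (mem_edgeFinset.1 he)).isUnit
    refine inv_eq_left_inv ?_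
    rw [← map_smul, ← map_smul, ← map_add, ← map_mul, ← map_one e]
    congr 1
    rw [add_mul, smul_mul_assoc, smul_mul_assoc,
      hT.blockLapMatrix_mul_weightedDist fun e he => (hw e he).isUnit,
      hT.degree_outer_smul_mul_weightedDist hRinv]
    module
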